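/- Let F = K(x₁,…,x_ℓ) be the field of rational functions over a field K of characteristic zero, and let f₁, …, f_p ∈ F \ K with p ≥ 2. Then ∂[dlog f₁ : ⋯ : dlog f_p] = 0 if and only if there exists (h₁, …, h_p) ∈ F^p, not all zero, such that h₁f₁ + ⋯ + h_pf_p = 0 and h₁ df₁ + ⋯ + h_p df_p = 0. -/

import Mathlib

open ExteriorAlgebra MvPolynomial

set_option synthInstance.maxHeartbeats 1000000
set_option maxHeartbeats 1000000

noncomputable def wedgeList (F : Type*) {W : Type*} [Field F] [AddCommGroup W] [Module F W]
    (l : List W) : ExteriorAlgebra F W := (l.map (ι F)).prod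

noncomputable def wedge (F : Type*) {W : Type*} [Field F] [AddCommGroup W] [Module F W]
    {p : ℕ} (ω : Fin p → W) : ExteriorAlgebra F W := wedgeList F (List.ofFn ω)

noncomputable def der (F : Type*) {W : Type*} [Field F] [AddCommGroup W] [Module F W]
    {p : ℕ} (ω : Fin p → W) : ExteriorAlgebra F W :=
  ∑ k : Fin p, (-1 : F) ^ (k : ℕ) • wedgeList F ((List.ofFn ω).eraseIdx k)

/-- The field of rational functions `K(x₁, …, x_ℓ)`. -/
abbrev Fq (K : Type) [Field K] (ℓ : ℕ) : Type := FractionRing (MvPolynomial (Fin ℓ) K)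

/-- `dlog f = df / f` with values in the module of Kähler differentials `Ω¹_{F/K}`. -/
noncomputable def dlog (K : Type) [Field K] (ℓ : ℕ) (f : Fq K ℓ) : Ω[Fq K ℓ⁄K] :=
  f⁻¹ • KaehlerDifferential.D K (Fq K ℓ) f

/-! Expanding `(ω₁ - z) ∧ ⋯ ∧ (ωₙ - z)` multilinearly, every term containing `z` twice vanishes,
which gives `∂[z : ω₁ : ⋯ : ωₙ] = (ω₁ - z) ∧ ⋯ ∧ (ωₙ - z)`. Over a field a wedge of vectors
vanishes iff they are linearly dependent, so `∂[ω₀ : ⋯ : ωₙ] = 0` iff the points `ωᵢ` are affinely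
dependent: `∑ gᵢ ωᵢ = 0` for some nonzero `g` with `∑ gᵢ = 0`. For `ωᵢ = dfᵢ / fᵢ` the substitution
`gᵢ = hᵢ fᵢ` turns this into the condition on `h`. -/

section ExteriorAlgebra

variable {F W : Type*} [Field F] [AddCommGroup W] [Module F W]

theorem wedgeList_cons (a : W) (l : List W) : wedgeList F (a :: l) = ι F a * wedgeList F l := by
  simp [wedgeList]

theorem wedgeList_ofFn {n : ℕ} (ω : Fin n → W) : wedgeList F (List.ofFn ω) = ιMulti F n ω := by
  rw [ιMulti_apply, wedgeList, List.map_ofFn]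
  rfl

theorem der_cons {n : ℕ} (a : W) (ω : Fin n → W) :
    der F (Fin.cons a ω : Fin (n + 1) → W) = ιMulti F n ω - ι F a * der F ω := by
  simp [der, Fin.sum_univ_succ, wedgeList_ofFn, wedgeList_cons, Finset.mul_sum, pow_succ,
    sub_eq_add_neg]

theorem ιMulti_sub_const {n : ℕ} (ω : Fin n → W) (z : W) :
    ιMulti F n (fun i => ω i - z) = ιMulti F n ω - ι F z * der F ω := by
  induction n with
  | zero => simp [der]
  | succ n ih =>
    obtain ⟨a, t, rfl⟩ : ∃ a t, ω = Fin.cons a t := ⟨_, _, (Fin.cons_self_tail ω).symm⟩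
    have hza : ι F a * ι F z = -(ι F z * ι F a) := eq_neg_of_add_eq_zero_left (ι_add_mul_swap a z)
    rw [der_cons, ιMulti_succ_apply, ιMulti_succ_apply]
    simp only [Fin.cons_zero, Matrix.vecTail, Function.comp_def, Fin.cons_succ]
    rw [ih]
    simp only [map_sub, sub_mul, mul_sub, ← mul_assoc, ι_sq_zero, hza, zero_mul, neg_mul]
    abel

theorem der_cons_eq_ιMulti_sub {n : ℕ} (z : W) (ω : Fin n → W) :
    der F (Fin.cons z ω : Fin (n + 1) → W) = ιMulti F n (fun i => ω i - z) := by
  rw [der_cons, ιMulti_sub_const]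

theorem ιMulti_eq_zero_iff_not_linearIndependent {n : ℕ} (v : Fin n → W) :
    ιMulti F n v = 0 ↔ ¬ LinearIndependent F v := by
  refine ⟨fun h hv => ?_, AlternatingMap.map_linearDependent _ v⟩
  -- `v` is the member of `ιMulti_family` indexed by the full subset of `Fin n`.
  let s : Set.powersetCard (Fin n) n := ⟨Finset.univ, by simp⟩
  have hs : Set.powersetCard.ofFinEmbEquiv.symm s = RelEmbedding.refl (· ≤ ·) :=
    (Finset.orderEmbOfFin_unique' _ fun _ => Finset.mem_univ _).symm
  apply (exteriorPower.ιMulti_family_linearIndependent_field (n := n) hv).ne_zero s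
  rw [exteriorPower.ιMulti_family, hs]
  exact Subtype.ext h

end ExteriorAlgebra

section AffineIndependent

variable {k V ι : Type*} [Ring k] [AddCommGroup V] [Module k V]

theorem affineIndependent_cons_iff {n : ℕ} (z : V) (ω : Fin n → V) :
    AffineIndependent k (Fin.cons z ω : Fin (n + 1) → V) ↔
      LinearIndependent k (fun i => ω i - z) := by
  rw [affineIndependent_iff_linearIndependent_vsub k _ 0]
  exact (linearIndependent_equiv' (finSuccAboveEquiv 0)
    (by ext; simp [finSuccAboveEquiv_apply])).symm

theorem not_affineIndependent_iff [Fintype ι] (p : ι → V) :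
    ¬ AffineIndependent k p ↔ ∃ w : ι → k, w ≠ 0 ∧ ∑ i, w i = 0 ∧ ∑ i, w i • p i = 0 := by
  rw [affineIndependent_iff_of_fintype]
  push Not
  refine exists_congr fun w => ?_
  constructor
  · rintro ⟨hw, hp, i, hi⟩
    rw [Finset.univ.weightedVSub_eq_linear_combination hw] at hp
    exact ⟨fun h => hi (congrFun h i), hw, hp⟩
  · rintro ⟨hne, hw, hp⟩
    rw [← Finset.univ.weightedVSub_eq_linear_combination hw] at hp
    exact ⟨hw, hp, Function.ne_iff.mp hne⟩

end AffineIndependent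

theorem der_eq_zero_iff_not_affineIndependent {F W : Type*} [Field F] [AddCommGroup W]
    [Module F W] {n : ℕ} (ω : Fin (n + 1) → W) : der F ω = 0 ↔ ¬ AffineIndependent F ω := by
  rw [← Fin.cons_self_tail ω, der_cons_eq_ιMulti_sub, ιMulti_eq_zero_iff_not_linearIndependent,
    affineIndependent_cons_iff]

theorem not_affineIndependent_inv_smul_iff {F M ι : Type*} [Field F] [AddCommGroup M]
    [Module F M] [Fintype ι] {f : ι → F} (hf : ∀ i, f i ≠ 0) (u : ι → M) :
    ¬ AffineIndependent F (fun i => (f i)⁻¹ • u i) ↔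
      ∃ h : ι → F, h ≠ 0 ∧ ∑ i, h i * f i = 0 ∧ ∑ i, h i • u i = 0 := by
  rw [not_affineIndependent_iff]
  constructor
  · rintro ⟨w, hw, hsum, hcomb⟩
    refine ⟨fun i => w i / f i, fun h => hw (funext fun i => ?_), ?_, ?_⟩
    · simpa [hf i] using congrFun h i
    · simpa [div_mul_cancel₀ _ (hf _)] using hsum
    · simpa [div_eq_mul_inv, mul_smul] using hcomb
  · rintro ⟨h, hh, hsum, hcomb⟩
    refine ⟨fun i => h i * f i, fun h0 => hh (funext fun i => ?_), hsum, ?_⟩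
    · simpa [hf i] using congrFun h0 i
    · simpa [smul_smul, mul_assoc, mul_inv_cancel₀ (hf _)] using hcomb

theorem der_dlog_eq_zero_iff_general {K : Type} [Field K] {ℓ : ℕ} {p : ℕ}
    (hp : 2 ≤ p) (f : Fin p → Fq K ℓ)
    (hf : ∀ i, f i ∉ Set.range (algebraMap K (Fq K ℓ))) :
    der (Fq K ℓ) (fun i => dlog K ℓ (f i)) = 0 ↔
      ∃ h : Fin p → Fq K ℓ, h ≠ 0 ∧ (∑ i, h i * f i) = 0 ∧
        (∑ i, h i • KaehlerDifferential.D K (Fq K ℓ) (f i)) = 0 := by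
  obtain ⟨n, rfl⟩ : ∃ n, p = n + 1 := ⟨p - 1, by omega⟩
  have hf0 (i : Fin (n + 1)) : f i ≠ 0 := fun h0 => hf i ⟨0, by rw [map_zero, h0]⟩
  rw [der_eq_zero_iff_not_affineIndependent]
  exact not_affineIndependent_inv_smul_iff hf0 _

/-- `∂[dlog f₁ : ⋯ : dlog f_p] = 0` iff there exists `(h₁,…,h_p) ≠ 0` with
`Σ h_i f_i = 0` and `Σ h_i df_i = 0`. -/
theorem der_dlog_eq_zero_iff {K : Type} [Field K] [CharZero K] {ℓ : ℕ} {p : ℕ}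
    (hp : 2 ≤ p) (f : Fin p → Fq K ℓ)
    (hf : ∀ i, f i ∉ Set.range (algebraMap K (Fq K ℓ))) :
    der (Fq K ℓ) (fun i => dlog K ℓ (f i)) = 0 ↔
      ∃ h : Fin p → Fq K ℓ, h ≠ 0 ∧ (∑ i, h i * f i) = 0 ∧
        (∑ i, h i • KaehlerDifferential.D K (Fq K ℓ) (f i)) = 0 :=
  der_dlog_eq_zero_iff_general hp f hf
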